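/- arXiv:2303.00982 — 5 statements merged into one kernel-verified Lean document; each statement's English description precedes it below -/
import Mathlib

section
/- For a real-valued integrable random variable Y and α ∈ (0,1), the upper conditional value-at-risk satisfies the dual representation: α · CVaR_U(α) = inf over β ∈ ℝ of (β·α + E[max(Y − β, 0)]), and the infimum is attained at the generalized quantile β* = inf{β : F(β) ≥ 1 − α}, where F is the CDF of Y. -/
open MeasureTheory ProbabilityTheory Set Filter Topology

/-!
The generalized quantile `q` splits the distribution so that `P(Y > q) ≤ α ≤ P(Y ≥ q)`.
Since `E[Y·1{Y > q}] = E[(Y − q)⁺] + q·P(Y > q)`, the value of the objective at `q` is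
`α · CVaR_U(α)`. For optimality, the hinge `β ↦ (y − β)⁺` is convex with subgradients
`−1{y > q}` and `−1{y ≥ q}` at `q`; integrating the subgradient inequalities gives
`E[(Y − β)⁺] ≥ E[(Y − q)⁺] + (q − β)·P(Y ∈ s)` for `s` either tail, and choosing the tail
according to the sign of `q − β` compensates the change `(β − q)·α` of the linear term.
-/

namespace ProbabilityTheory

variable {ν : Measure ℝ} {u : ℝ}

lemma bddBelow_setOf_le_cdf (hu : 0 < u) : BddBelow {x | u ≤ cdf ν x} := by
  obtain ⟨b, hb⟩ := eventually_atBot.mp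
    ((tendsto_cdf_atBot ν).eventually (eventually_lt_nhds hu))
  exact ⟨b, fun x hx => not_lt.mp fun hxb => (hb x hxb.le).not_ge hx⟩

lemma setOf_le_cdf_nonempty (hu : u < 1) : {x | u ≤ cdf ν x}.Nonempty :=
  ((tendsto_cdf_atTop ν).eventually (eventually_ge_nhds hu)).exists

lemma le_cdf_sInf_setOf_le_cdf (hu : u < 1) : u ≤ cdf ν (sInf {x | u ≤ cdf ν x}) := by
  set q := sInf {x | u ≤ cdf ν x}
  have hright : ∀ x, q < x → u ≤ cdf ν x := fun x hx => by
    obtain ⟨y, hy, hyx⟩ := exists_lt_of_csInf_lt (setOf_le_cdf_nonempty hu) hx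
    exact hy.trans (monotone_cdf ν hyx.le)
  refine ge_of_tendsto
    (((cdf ν).right_continuous q).mono_left (nhdsWithin_mono q Ioi_subset_Ici_self)) ?_
  filter_upwards [self_mem_nhdsWithin] with x hx using hright x hx

lemma measureReal_Iio_sInf_setOf_le_cdf_le [IsProbabilityMeasure ν] (hu : 0 < u) :
    ν.real (Iio (sInf {x | u ≤ cdf ν x})) ≤ u := by
  set q := sInf {x | u ≤ cdf ν x}
  have hleft : ∀ x, x < q → cdf ν x ≤ u := fun x hx =>
    le_of_not_ge fun hux => (csInf_le (bddBelow_setOf_le_cdf hu) hux).not_gt hx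
  have hlim : Function.leftLim (cdf ν) q ≤ u := by
    refine le_of_tendsto ((monotone_cdf ν).tendsto_leftLim q) ?_
    filter_upwards [self_mem_nhdsWithin] with x hx using hleft x hx
  have hIio := (cdf ν).measure_Iio (tendsto_cdf_atBot ν) q
  rw [measure_cdf, sub_zero] at hIio
  rw [measureReal_def, hIio, ENNReal.toReal_ofReal']
  exact max_le hlim hu.le

lemma cdf_map_eq_measureReal {Ω : Type*} [MeasurableSpace Ω] {μ : Measure Ω}
    [IsProbabilityMeasure μ] {Y : Ω → ℝ} (hY : Measurable Y) (x : ℝ) :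
    cdf (μ.map Y) x = μ.real {ω | Y ω ≤ x} := by
  have := Measure.isProbabilityMeasure_map (μ := μ) hY.aemeasurable
  rw [cdf_eq_real, map_measureReal_apply hY measurableSet_Iic]
  rfl

end ProbabilityTheory

lemma max_sub_add_ite_le {p : Prop} [Decidable p] {y q : ℝ} (hlt : q < y → p)
    (hle : p → q ≤ y) (β : ℝ) :
    max (y - q) 0 + (if p then q - β else 0) ≤ max (y - β) 0 := by
  split_ifs with hp
  · rw [max_eq_left (sub_nonneg.2 (hle hp)), sub_add_sub_cancel]
    exact le_max_left _ _
  · rw [max_eq_right (sub_nonpos.2 (not_lt.1 (mt hlt hp))), add_zero]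
    exact le_max_right _ _

namespace MeasureTheory

variable {Ω : Type*} [MeasurableSpace Ω] {μ : Measure Ω} {Y : Ω → ℝ}

section Hinge

variable [IsFiniteMeasure μ]

lemma Integrable.max_sub_const_zero (hY : Integrable Y μ) (β : ℝ) :
    Integrable (fun ω => max (Y ω - β) 0) μ :=
  (hY.sub (integrable_const β)).pos_part

lemma integral_max_sub_add_le (hY : Integrable Y μ) {s : Set Ω} (hs : MeasurableSet s)
    {q : ℝ} (hlt : {ω | q < Y ω} ⊆ s) (hle : s ⊆ {ω | q ≤ Y ω}) (β : ℝ) :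
    ∫ ω, max (Y ω - q) 0 ∂μ + (q - β) * μ.real s ≤ ∫ ω, max (Y ω - β) 0 ∂μ := by
  classical
  have hind : Integrable (s.indicator fun _ => q - β) μ := (integrable_const _).indicator hs
  calc ∫ ω, max (Y ω - q) 0 ∂μ + (q - β) * μ.real s
      = ∫ ω, (max (Y ω - q) 0 + s.indicator (fun _ => q - β) ω) ∂μ := by
        rw [integral_add (hY.max_sub_const_zero q) hind, integral_indicator_const _ hs,
          smul_eq_mul, mul_comm]
    _ ≤ ∫ ω, max (Y ω - β) 0 ∂μ := by
        refine integral_mono ((hY.max_sub_const_zero q).add hind) (hY.max_sub_const_zero β)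
          fun ω => ?_
        simpa only [indicator_apply] using
          max_sub_add_ite_le (@hlt ω) (@hle ω) β

lemma integral_ite_lt_eq (hY : Measurable Y) (hInt : Integrable Y μ) (q : ℝ) :
    ∫ ω, (if q < Y ω then Y ω else 0) ∂μ
      = ∫ ω, max (Y ω - q) 0 ∂μ + q * μ.real {ω | q < Y ω} := by
  have hs : MeasurableSet {ω | q < Y ω} := measurableSet_lt measurable_const hY
  have hsplit : (fun ω => if q < Y ω then Y ω else 0)
      = fun ω => max (Y ω - q) 0 + {ω | q < Y ω}.indicator (fun _ => q) ω := by
    funext ω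
    by_cases h : q < Y ω
    · rw [if_pos h, indicator_of_mem (show ω ∈ {ω | q < Y ω} from h),
        max_eq_left (sub_nonneg.2 h.le), sub_add_cancel]
    · rw [if_neg h, indicator_of_notMem (show ω ∉ {ω | q < Y ω} from h),
        max_eq_right (sub_nonpos.2 (not_lt.1 h)), zero_add]
  rw [hsplit, integral_add (hInt.max_sub_const_zero q) ((integrable_const q).indicator hs),
    integral_indicator_const _ hs, smul_eq_mul, mul_comm]

end Hinge

section Quantile

variable [IsProbabilityMeasure μ] {u : ℝ}

lemma measureReal_lt_eq_one_sub_measureReal_le (hY : Measurable Y) (q : ℝ) :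
    μ.real {ω | q < Y ω} = 1 - μ.real {ω | Y ω ≤ q} := by
  rw [← probReal_compl_eq_one_sub (s := {ω | Y ω ≤ q}) (hY measurableSet_Iic)]
  congr 1
  ext ω
  simp

lemma measureReal_sInf_lt_le (hY : Measurable Y) (hu : u < 1) :
    μ.real {ω | sInf {x | u ≤ μ.real {ω | Y ω ≤ x}} < Y ω} ≤ 1 - u := by
  have := le_cdf_sInf_setOf_le_cdf (ν := μ.map Y) hu
  simp only [cdf_map_eq_measureReal hY] at this
  rw [measureReal_lt_eq_one_sub_measureReal_le hY]
  linarith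

lemma one_sub_le_measureReal_sInf_le (hY : Measurable Y) (hu : 0 < u) :
    1 - u ≤ μ.real {ω | sInf {x | u ≤ μ.real {ω | Y ω ≤ x}} ≤ Y ω} := by
  set q := sInf {x | u ≤ μ.real {ω | Y ω ≤ x}}
  have := Measure.isProbabilityMeasure_map (μ := μ) hY.aemeasurable
  have := measureReal_Iio_sInf_setOf_le_cdf_le (ν := μ.map Y) hu
  simp only [cdf_map_eq_measureReal hY] at this
  rw [map_measureReal_apply hY measurableSet_Iio] at this
  rw [show {ω | q ≤ Y ω} = (Y ⁻¹' Iio q)ᶜ by ext; simp,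
    probReal_compl_eq_one_sub (hY measurableSet_Iio)]
  linarith

end Quantile

end MeasureTheory

/-- Rockafellar–Uryasev dual representation of the upper conditional value-at-risk:
`α · CVaR_U(α) = inf_{β ∈ ℝ} (β·α + E[max(Y − β, 0)])`, with the infimum attained at
the generalized quantile `q = inf{β : F(β) ≥ 1 − α}`. Here `CVaR_U(α)` is the mean of
the upper `α`-tail of `Y`, i.e. `(1/α)·(E[Y·1{Y > q}] + q·(F(q) − (1 − α)))`. -/
theorem cvar_upper_dual {Ω : Type*} [MeasurableSpace Ω] (μ : Measure Ω)
    [IsProbabilityMeasure μ] (Y : Ω → ℝ) (hY : Measurable Y) (hInt : Integrable Y μ)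
    (α : ℝ) (hα : α ∈ Set.Ioo (0 : ℝ) 1)
    (F : ℝ → ℝ) (hF : ∀ β, F β = (μ {ω | Y ω ≤ β}).toReal)
    (q : ℝ) (hq : q = sInf {β : ℝ | 1 - α ≤ F β})
    (CVaRU : ℝ)
    (hC : CVaRU = (1 / α) *
      ((∫ ω, (if q < Y ω then Y ω else 0) ∂μ) + q * (F q - (1 - α)))) :
    (α * CVaRU = q * α + ∫ ω, max (Y ω - q) 0 ∂μ) ∧
      ∀ β : ℝ, α * CVaRU ≤ β * α + ∫ ω, max (Y ω - β) 0 ∂μ := by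
  obtain ⟨hα0, hα1⟩ := hα
  obtain rfl : F = fun β => μ.real {ω | Y ω ≤ β} := funext hF
  have hupper : μ.real {ω | q < Y ω} ≤ α := by
    simpa [hq] using measureReal_sInf_lt_le (μ := μ) hY (u := 1 - α) (by linarith)
  have hlower : α ≤ μ.real {ω | q ≤ Y ω} := by
    simpa [hq] using one_sub_le_measureReal_sInf_le (μ := μ) hY (u := 1 - α) (by linarith)
  have hopt : α * CVaRU = q * α + ∫ ω, max (Y ω - q) 0 ∂μ := by
    rw [hC, integral_ite_lt_eq hY hInt q, measureReal_lt_eq_one_sub_measureReal_le hY]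
    field_simp
    ring
  refine ⟨hopt, fun β => ?_⟩
  rcases le_total q β with hqβ | hβq
  · have := integral_max_sub_add_le hInt (measurableSet_lt measurable_const hY)
      subset_rfl (ofPred_subset_ofPred.2 fun _ => le_of_lt) β (q := q)
    nlinarith [mul_nonneg (sub_nonneg.2 hqβ) (sub_nonneg.2 hupper)]
  · have := integral_max_sub_add_le hInt (measurableSet_le measurable_const hY)
      (ofPred_subset_ofPred.2 fun _ => le_of_lt) subset_rfl β (q := q)
    nlinarith [mul_nonneg (sub_nonneg.2 hβq) (sub_nonneg.2 hlower)]
end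

section
/- If Y is a {0,1}-valued random variable with P(Y = 1) = p_Y, and s₀, s₁ > 0 with p = s₀/s₁ ∈ (0,1], then inf over β ∈ ℝ of (β·s₀ + s₁·E[max(Y − β, 0)]) = s₀ + min(0, s₁·p_Y − s₀). -/
/-!
A `{0,1}`-valued `Y` equals the indicator of `{Y = 1}`, so
`E[max(Y - β, 0)] = p_Y max(1 - β, 0) + (1 - p_Y) max(-β, 0)` and the objective is a convex
piecewise-linear function of `β` with kinks at `0` and `1`. Its slope is `s₀ - s₁ ≤ 0` left of `0`
and `s₀ > 0` right of `1`, so the infimum is the smaller of its values `s₁ p_Y` at `β = 0`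
and `s₀` at `β = 1`.
-/

open MeasureTheory

theorem integral_comp_of_forall_eq_zero_or_eq_one {Ω : Type*} [MeasurableSpace Ω]
    {μ : Measure Ω} [IsProbabilityMeasure μ] {Y : Ω → ℝ} (hY : Measurable Y)
    (hbin : ∀ ω, Y ω = 0 ∨ Y ω = 1) (f : ℝ → ℝ) :
    ∫ ω, f (Y ω) ∂μ = μ.real {ω | Y ω = 1} * f 1 + (1 - μ.real {ω | Y ω = 1}) * f 0 := by
  have hA : MeasurableSet {ω | Y ω = 1} := hY (measurableSet_singleton 1)
  have hf : (fun ω ↦ f (Y ω)) = fun ω ↦ f 0 + {ω | Y ω = 1}.indicator (fun _ ↦ f 1 - f 0) ω := by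
    funext ω
    rcases hbin ω with h | h <;> simp [Set.indicator, h]
  rw [hf, integral_add (integrable_const _) ((integrable_const _).indicator hA),
    integral_indicator_const _ hA, integral_const, probReal_univ, smul_eq_mul, smul_eq_mul]
  ring

theorem isLeast_range_binary_dual {p a b : ℝ} (ha : 0 ≤ a) (hab : a ≤ b) :
    IsLeast (Set.range fun β : ℝ ↦ β * a + b * (p * max (1 - β) 0 + (1 - p) * max (-β) 0))
      (min a (b * p)) := by
  refine ⟨?_, ?_⟩
  · rcases le_total a (b * p) with h | h
    · exact ⟨1, by simp [min_eq_left h]⟩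
    · exact ⟨0, by simp [min_eq_right h]⟩
  · rintro _ ⟨β, rfl⟩
    dsimp only
    have hle_a := min_le_left a (b * p)
    have hle_bp := min_le_right a (b * p)
    rcases le_total β 0 with hβ₀ | hβ₀
    · rw [max_eq_left (show 0 ≤ 1 - β by linarith), max_eq_left (show 0 ≤ -β by linarith)]
      nlinarith
    rcases le_total β 1 with hβ₁ | hβ₁
    · rw [max_eq_left (show 0 ≤ 1 - β by linarith), max_eq_right (show -β ≤ 0 by linarith)]
      nlinarith
    · rw [max_eq_right (show 1 - β ≤ 0 by linarith), max_eq_right (show -β ≤ 0 by linarith)]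
      nlinarith

/-- Binary-outcome closed form of the dual CVaR representation used in the upper
trimming (Lee) bound numerator: for a `{0,1}`-valued outcome `Y` with `P(Y=1) = p_Y`
and `s₀, s₁ > 0` with `p = s₀/s₁ ∈ (0,1]`,
`inf_{β ∈ ℝ} (β·s₀ + s₁·E[max(Y − β, 0)]) = s₀ + min(0, s₁·p_Y − s₀)`. -/
theorem lee_binary_upper {Ω : Type*} [MeasurableSpace Ω] (μ : Measure Ω)
    [IsProbabilityMeasure μ] (Y : Ω → ℝ) (hY : Measurable Y)
    (hbin : ∀ ω, Y ω = 0 ∨ Y ω = 1)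
    (pY s₀ s₁ : ℝ) (hpY : pY = (μ {ω | Y ω = 1}).toReal)
    (hs₀ : 0 < s₀) (hs₁ : 0 < s₁) (hp : s₀ / s₁ ≤ 1) :
    (⨅ β : ℝ, (β * s₀ + s₁ * ∫ ω, max (Y ω - β) 0 ∂μ)) =
      s₀ + min 0 (s₁ * pY - s₀) := by
  rw [← measureReal_def] at hpY
  have hs : s₀ ≤ s₁ := (div_le_one hs₁).mp hp
  have hcvar (β : ℝ) : ∫ ω, max (Y ω - β) 0 ∂μ = pY * max (1 - β) 0 + (1 - pY) * max (-β) 0 := by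
    simpa [hpY] using integral_comp_of_forall_eq_zero_or_eq_one hY hbin (fun y ↦ max (y - β) 0)
  simp_rw [hcvar]
  rw [iInf, (isLeast_range_binary_dual hs₀.le hs).csInf_eq, ← min_add_add_left]
  simp
end

section
/- Suppose (S(1), S(0)) ⟂ Z | X, and S = S(1)·D + S(0)·(1−D) with D determined by the Roy selection rule D = 1 if S(1) > S(0), D = 0 if S(1) < S(0). Then for every z in the support of Z given X = x: P(S(1) = 1, S(0) = 0 | X = x) ≤ P(S = 1, D = 1 | Z = z, X = x), and hence P(S(1) = 1, S(0) = 0) ≤ E_X[inf_z P(S = 1, D = 1 | Z = z, X)]. -/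
/-!
Under the Roy rule an agent with `S(1) = 1, S(0) = 0` strictly prefers treatment, so the event
`{S(1) = 1, S(0) = 0}` is contained in `{S = 1, D = 1}`. Conditional independence of `(S(1), S(0))`
and `Z` given `X` makes the conditional probability of the former event the same whether or not
one also conditions on `Z = z`; monotonicity then gives the pointwise bound. Splitting along the
cells `{X = x}` gives the bound on the unconditional probability (by a union bound, since nothing
is assumed measurable).
-/

open MeasureTheory

/-- Conditional probability `P(A | B)` as a real number. -/
noncomputable def condP {Ω : Type*} [MeasurableSpace Ω] (μ : Measure Ω) (A B : Set Ω) : ℝ :=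
  (μ (A ∩ B)).toReal / (μ B).toReal

section condP

variable {Ω : Type*} [MeasurableSpace Ω] (μ : Measure Ω) [IsFiniteMeasure μ]

theorem condP_mono {A A' : Set Ω} (B : Set Ω) (h : A ⊆ A') : condP μ A B ≤ condP μ A' B :=
  div_le_div_of_nonneg_right (measureReal_mono (Set.inter_subset_inter_left B h))
    measureReal_nonneg

theorem measureReal_inter_eq_mul_condP (A B : Set Ω) :
    μ.real (A ∩ B) = μ.real B * condP μ A B := by
  rcases eq_or_ne (μ.real B) 0 with hB | hB
  · rw [hB, zero_mul]
    exact le_antisymm (hB ▸ measureReal_mono Set.inter_subset_right) measureReal_nonneg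
  · exact (mul_div_cancel₀ _ hB).symm

theorem condP_inter_right_of_condIndep {A B C : Set Ω}
    (hind : condP μ (A ∩ C) B = condP μ A B * condP μ C B) (hCB : μ (C ∩ B) ≠ 0) :
    condP μ A (C ∩ B) = condP μ A B := by
  have hCB' : μ.real (C ∩ B) ≠ 0 := (ENNReal.toReal_pos hCB (measure_ne_top μ _)).ne'
  have hB : μ.real B ≠ 0 := fun h =>
    hCB' (le_antisymm (h ▸ measureReal_mono Set.inter_subset_right) measureReal_nonneg)
  simp only [condP, ← measureReal_def, Set.inter_assoc] at hind ⊢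
  rw [div_eq_div_iff hCB' hB]
  field_simp at hind
  linear_combination hind

theorem measureReal_le_sum_mul_condP {ι : Type*} [Fintype ι] (X : Ω → ι) (A : Set Ω) :
    μ.real A ≤ ∑ x, μ.real {ω | X ω = x} * condP μ A {ω | X ω = x} := by
  calc μ.real A = μ.real (⋃ x, A ∩ {ω | X ω = x}) := by
        rw [← Set.inter_iUnion, Set.iUnion_eq_univ_iff.2 fun ω => ⟨X ω, rfl⟩, Set.inter_univ]
    _ ≤ ∑ x, μ.real (A ∩ {ω | X ω = x}) := measureReal_iUnion_fintype_le _
    _ = ∑ x, μ.real {ω | X ω = x} * condP μ A {ω | X ω = x} := by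
        simp only [measureReal_inter_eq_mul_condP]

end condP

theorem setOf_roy_subset {Ω : Type*} {S1 S0 D S : Ω → ℕ} (hroy : ∀ ω, S1 ω > S0 ω → D ω = 1)
    (hS : ∀ ω, S ω = if D ω = 1 then S1 ω else S0 ω) :
    {ω | S1 ω = 1 ∧ S0 ω = 0} ⊆ {ω | S ω = 1 ∧ D ω = 1} := by
  rintro ω ⟨h1, h0⟩
  have hd : D ω = 1 := hroy ω (by omega)
  exact ⟨by rw [hS ω, if_pos hd, h1], hd⟩

theorem roy_bounds_general {Ω 𝒳 𝒵 : Type*} [MeasurableSpace Ω] [Fintype 𝒳]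
    [Nonempty 𝒵] (μ : Measure Ω) [IsProbabilityMeasure μ]
    (S1 S0 D S : Ω → ℕ) (X : Ω → 𝒳) (Z : Ω → 𝒵)
    (hroy : ∀ ω, (S1 ω > S0 ω → D ω = 1) ∧ (S1 ω < S0 ω → D ω = 0))
    (hS : ∀ ω, S ω = if D ω = 1 then S1 ω else S0 ω)
    (hpos : ∀ (x : 𝒳) (z : 𝒵), μ ({ω | Z ω = z} ∩ {ω | X ω = x}) ≠ 0)
    (hCI : ∀ (x : 𝒳) (A : Set (ℕ × ℕ)) (z : 𝒵),
      condP μ ({ω | (S1 ω, S0 ω) ∈ A} ∩ {ω | Z ω = z}) {ω | X ω = x} =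
        condP μ {ω | (S1 ω, S0 ω) ∈ A} {ω | X ω = x} *
          condP μ {ω | Z ω = z} {ω | X ω = x}) :
    (∀ (x : 𝒳) (z : 𝒵),
        condP μ {ω | S1 ω = 1 ∧ S0 ω = 0} {ω | X ω = x} ≤
          condP μ {ω | S ω = 1 ∧ D ω = 1} ({ω | Z ω = z} ∩ {ω | X ω = x})) ∧
      (μ {ω | S1 ω = 1 ∧ S0 ω = 0}).toReal ≤
        ∑ x : 𝒳, (μ {ω | X ω = x}).toReal *
          ⨅ z : 𝒵, condP μ {ω | S ω = 1 ∧ D ω = 1} ({ω | Z ω = z} ∩ {ω | X ω = x}) := by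
  have pointwise : ∀ x z, condP μ {ω | S1 ω = 1 ∧ S0 ω = 0} {ω | X ω = x} ≤
      condP μ {ω | S ω = 1 ∧ D ω = 1} ({ω | Z ω = z} ∩ {ω | X ω = x}) := fun x z =>
    calc condP μ {ω | S1 ω = 1 ∧ S0 ω = 0} {ω | X ω = x}
        = condP μ {ω | S1 ω = 1 ∧ S0 ω = 0} ({ω | Z ω = z} ∩ {ω | X ω = x}) :=
          (condP_inter_right_of_condIndep μ
            -- this `A` makes `{ω | (S1 ω, S0 ω) ∈ A}` definitionally the event at hand
            (hCI x {p | p.1 = 1 ∧ p.2 = 0} z) (hpos x z)).symm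
      _ ≤ _ := condP_mono μ _ (setOf_roy_subset (fun ω => (hroy ω).1) hS)
  refine ⟨pointwise, ?_⟩
  calc (μ {ω | S1 ω = 1 ∧ S0 ω = 0}).toReal
      ≤ ∑ x, μ.real {ω | X ω = x} * condP μ {ω | S1 ω = 1 ∧ S0 ω = 0} {ω | X ω = x} :=
        measureReal_le_sum_mul_condP μ X _
    _ ≤ _ := Finset.sum_le_sum fun x _ =>
        mul_le_mul_of_nonneg_left (le_ciInf (pointwise x)) measureReal_nonneg

/-- Covariate-assisted Roy model (Mourifié–Henry) bounds: if `(S(1), S(0)) ⟂ Z ∣ X`,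
the agent chooses `D` by the Roy rule (`S(1) > S(0) ⟹ D = 1`, `S(1) < S(0) ⟹ D = 0`), and
`S = S(1)·D + S(0)·(1−D)`, then for every `x` and every `z` in the (common) support,
`P(S(1)=1, S(0)=0 ∣ X=x) ≤ P(S=1, D=1 ∣ Z=z, X=x)`, and hence
`P(S(1)=1, S(0)=0) ≤ E_X[inf_z P(S=1, D=1 ∣ Z=z, X)]`. -/
theorem roy_bounds {Ω 𝒳 𝒵 : Type*} [MeasurableSpace Ω] [Fintype 𝒳] [Fintype 𝒵]
    [Nonempty 𝒵] (μ : Measure Ω) [IsProbabilityMeasure μ]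
    (S1 S0 D S : Ω → ℕ) (X : Ω → 𝒳) (Z : Ω → 𝒵)
    (hS1 : ∀ ω, S1 ω = 0 ∨ S1 ω = 1) (hS0 : ∀ ω, S0 ω = 0 ∨ S0 ω = 1)
    (hroy : ∀ ω, (S1 ω > S0 ω → D ω = 1) ∧ (S1 ω < S0 ω → D ω = 0))
    (hD : ∀ ω, D ω = 0 ∨ D ω = 1)
    (hS : ∀ ω, S ω = if D ω = 1 then S1 ω else S0 ω)
    (hpos : ∀ (x : 𝒳) (z : 𝒵), μ ({ω | Z ω = z} ∩ {ω | X ω = x}) ≠ 0)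
    (hCI : ∀ (x : 𝒳) (A : Set (ℕ × ℕ)) (z : 𝒵),
      condP μ ({ω | (S1 ω, S0 ω) ∈ A} ∩ {ω | Z ω = z}) {ω | X ω = x} =
        condP μ {ω | (S1 ω, S0 ω) ∈ A} {ω | X ω = x} *
          condP μ {ω | Z ω = z} {ω | X ω = x}) :
    (∀ (x : 𝒳) (z : 𝒵),
        condP μ {ω | S1 ω = 1 ∧ S0 ω = 0} {ω | X ω = x} ≤
          condP μ {ω | S ω = 1 ∧ D ω = 1} ({ω | Z ω = z} ∩ {ω | X ω = x})) ∧
      (μ {ω | S1 ω = 1 ∧ S0 ω = 0}).toReal ≤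
        ∑ x : 𝒳, (μ {ω | X ω = x}).toReal *
          ⨅ z : 𝒵, condP μ {ω | S ω = 1 ∧ D ω = 1} ({ω | Z ω = z} ∩ {ω | X ω = x}) :=
  roy_bounds_general μ S1 S0 D S X Z hroy hS hpos hCI
end

section
/- Let F₁, F₀ be CDFs of random variables S(1), S(0) on a common probability space, and let Δ = S(1) − S(0). Then for any d, t ∈ ℝ: P(Δ ≤ d) ≥ F₁(t) − P(S(0) < t − d), and hence P(Δ ≤ d) ≥ sup_t max(F₁(t) − F₀((t−d)⁻), 0), the lower Makarov bound. -/
open MeasureTheory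

theorem setOf_le_subset_setOf_sub_le_union_setOf_lt {Ω : Type*} (S1 S0 : Ω → ℝ) (d t : ℝ) :
    {ω | S1 ω ≤ t} ⊆ {ω | S1 ω - S0 ω ≤ d} ∪ {ω | S0 ω < t - d} := by
  intro ω hS1
  by_cases hS0 : S0 ω < t - d
  · exact Or.inr hS0
  · exact Or.inl (by simp only [Set.mem_ofPred] at hS1 hS0 ⊢; linarith)

theorem measureReal_sub_le_of_subset_union {α : Type*} [MeasurableSpace α] (μ : Measure α)
    [IsFiniteMeasure μ] {s t u : Set α} (h : s ⊆ t ∪ u) : μ.real s - μ.real u ≤ μ.real t := by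
  have := (measureReal_mono h).trans (measureReal_union_le (μ := μ) t u)
  linarith

theorem makarov_lower_general {Ω : Type*} [MeasurableSpace Ω] (μ : Measure Ω)
    [IsProbabilityMeasure μ] (S1 S0 : Ω → ℝ) :
    (∀ d t : ℝ,
        (μ {ω | S1 ω ≤ t}).toReal - (μ {ω | S0 ω < t - d}).toReal ≤
          (μ {ω | S1 ω - S0 ω ≤ d}).toReal) ∧
      ∀ d : ℝ,
        (⨆ t : ℝ, max ((μ {ω | S1 ω ≤ t}).toReal - (μ {ω | S0 ω < t - d}).toReal) 0) ≤
          (μ {ω | S1 ω - S0 ω ≤ d}).toReal := by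
  have pointwise : ∀ d t : ℝ,
      (μ {ω | S1 ω ≤ t}).toReal - (μ {ω | S0 ω < t - d}).toReal ≤
        (μ {ω | S1 ω - S0 ω ≤ d}).toReal := fun d t =>
    measureReal_sub_le_of_subset_union μ (setOf_le_subset_setOf_sub_le_union_setOf_lt S1 S0 d t)
  exact ⟨pointwise, fun d => ciSup_le fun t => max_le (pointwise d t) ENNReal.toReal_nonneg⟩

/-- Lower Makarov bound on the CDF of the treatment effect `Δ = S(1) − S(0)`:
for all `d, t`, `P(Δ ≤ d) ≥ F₁(t) − P(S(0) < t − d)`, and hence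
`P(Δ ≤ d) ≥ sup_t max(F₁(t) − F₀((t−d)⁻), 0)`. -/
theorem makarov_lower {Ω : Type*} [MeasurableSpace Ω] (μ : Measure Ω)
    [IsProbabilityMeasure μ] (S1 S0 : Ω → ℝ) (h1 : Measurable S1) (h0 : Measurable S0) :
    (∀ d t : ℝ,
        (μ {ω | S1 ω ≤ t}).toReal - (μ {ω | S0 ω < t - d}).toReal ≤
          (μ {ω | S1 ω - S0 ω ≤ d}).toReal) ∧
      ∀ d : ℝ,
        (⨆ t : ℝ, max ((μ {ω | S1 ω ≤ t}).toReal - (μ {ω | S0 ω < t - d}).toReal) 0) ≤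
          (μ {ω | S1 ω - S0 ω ≤ d}).toReal :=
  makarov_lower_general μ S1 S0
end

section
/- Let F₁, F₀ be CDFs of S(1), S(0) on a common probability space and Δ = S(1) − S(0). Then for any d, t ∈ ℝ: P(Δ ≤ d) ≤ 1 + min(F₁(t) − P(S(0) < t − d), 0), and hence P(Δ ≤ d) ≤ inf_t [1 + min(F₁(t) − F₀((t−d)⁻), 0)], the upper Makarov bound. -/
open MeasureTheory

/-!
If `S(1) - S(0) ≤ d` then either `S(1) ≤ t` or `S(0) ≥ t - d`, so by the union bound
`P(Δ ≤ d) ≤ F₁(t) + 1 - P(S(0) < t - d)`; together with `P(Δ ≤ d) ≤ 1` this is the bound for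
each `t`, and the infimum over `t` follows.
-/

theorem setOf_sub_le_subset_union {α G : Type*} [AddCommGroup G] [LinearOrder G]
    [IsOrderedAddMonoid G] (X Y : α → G) (d t : G) :
    {ω | X ω - Y ω ≤ d} ⊆ {ω | X ω ≤ t} ∪ {ω | t - d ≤ Y ω} := by
  intro ω (hω : X ω - Y ω ≤ d)
  rcases le_or_gt (X ω) t with hX | hX
  · exact Or.inl hX
  · refine Or.inr (show t - d ≤ Y ω from ?_)
    rw [sub_le_iff_le_add] at hω ⊢
    exact hX.le.trans (by rwa [add_comm])

theorem measureReal_sub_le_le {Ω : Type*} [MeasurableSpace Ω] (μ : Measure Ω)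
    [IsProbabilityMeasure μ] (X Y : Ω → ℝ) (hY : Measurable Y) (d t : ℝ) :
    μ.real {ω | X ω - Y ω ≤ d} ≤ μ.real {ω | X ω ≤ t} + (1 - μ.real {ω | Y ω < t - d}) := by
  have hcompl : {ω | t - d ≤ Y ω} = {ω | Y ω < t - d}ᶜ := by ext; simp
  calc μ.real {ω | X ω - Y ω ≤ d}
      ≤ μ.real ({ω | X ω ≤ t} ∪ {ω | t - d ≤ Y ω}) :=
        measureReal_mono (setOf_sub_le_subset_union X Y d t)
    _ ≤ μ.real {ω | X ω ≤ t} + μ.real {ω | t - d ≤ Y ω} := measureReal_union_le _ _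
    _ = μ.real {ω | X ω ≤ t} + (1 - μ.real {ω | Y ω < t - d}) := by
        rw [hcompl, probReal_compl_eq_one_sub (measurableSet_lt hY measurable_const)]

theorem makarov_upper_general {Ω : Type*} [MeasurableSpace Ω] (μ : Measure Ω)
    [IsProbabilityMeasure μ] (S1 S0 : Ω → ℝ) (h0 : Measurable S0) :
    (∀ d t : ℝ,
        (μ {ω | S1 ω - S0 ω ≤ d}).toReal ≤
          1 + min ((μ {ω | S1 ω ≤ t}).toReal - (μ {ω | S0 ω < t - d}).toReal) 0) ∧
      ∀ d : ℝ,
        (μ {ω | S1 ω - S0 ω ≤ d}).toReal ≤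
          ⨅ t : ℝ, (1 + min ((μ {ω | S1 ω ≤ t}).toReal - (μ {ω | S0 ω < t - d}).toReal) 0) := by
  have pointwise : ∀ d t : ℝ,
      μ.real {ω | S1 ω - S0 ω ≤ d} ≤
        1 + min (μ.real {ω | S1 ω ≤ t} - μ.real {ω | S0 ω < t - d}) 0 := by
    intro d t
    rw [← min_add_add_left, add_zero]
    refine le_min ?_ measureReal_le_one
    linarith [measureReal_sub_le_le μ S1 S0 h0 d t]
  exact ⟨pointwise, fun d => le_ciInf (pointwise d)⟩

/-- Upper Makarov bound on the CDF of the treatment effect `Δ = S(1) − S(0)`: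
for all `d, t`, `P(Δ ≤ d) ≤ 1 + min(F₁(t) − P(S(0) < t − d), 0)`, and hence
`P(Δ ≤ d) ≤ inf_t [1 + min(F₁(t) − F₀((t−d)⁻), 0)]`. -/
theorem makarov_upper {Ω : Type*} [MeasurableSpace Ω] (μ : Measure Ω)
    [IsProbabilityMeasure μ] (S1 S0 : Ω → ℝ) (h1 : Measurable S1) (h0 : Measurable S0) :
    (∀ d t : ℝ,
        (μ {ω | S1 ω - S0 ω ≤ d}).toReal ≤
          1 + min ((μ {ω | S1 ω ≤ t}).toReal - (μ {ω | S0 ω < t - d}).toReal) 0) ∧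
      ∀ d : ℝ,
        (μ {ω | S1 ω - S0 ω ≤ d}).toReal ≤
          ⨅ t : ℝ, (1 + min ((μ {ω | S1 ω ≤ t}).toReal - (μ {ω | S0 ω < t - d}).toReal) 0) :=
  makarov_upper_general μ S1 S0 h0
end
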